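/- Let S = {1,…,N} be a finite set with the discrete σ-algebra, μ a probability measure on S, and let f : ℝ₊ × S → ℝ₊ be a Radon–Nikodym derivative with respect to ν_γ × μ of the absolutely continuous part, in the Lebesgue decomposition, of the law of (ζ,V) with respect to ν_γ × μ. Then for every t ∈ ℝ₊, inf{ ℙ((ζ−t,V) ∈ C)/(ν_γ×μ)(C) : C ∈ 𝔅_{ℝ₊}⊗𝒮, (ν_γ×μ)(C) > 0 } = e^{−γt} · essinf_{(x,s) ∈ (t,∞)×S} f(x,s), where the essential infimum is taken with respect to ν_γ × μ. -/

import Mathlib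

open MeasureTheory ProbabilityTheory Real Set

/-- The exponential distribution on `[0, ∞)` with mean `γ⁻¹` (rate `γ`), as a measure on `ℝ`. -/
noncomputable def expν (γ : ℝ) : Measure ℝ :=
  MeasureTheory.volume.withDensity
    (fun x => if 0 ≤ x then ENNReal.ofReal (γ * Real.exp (-γ * x)) else 0)

/-!
Write `m = ν_γ ⊗ μ` and `c = e^{-γt}`. By memorylessness, the image of `m` restricted to
`(t, ∞) × S` under the shift `(x, s) ↦ (x - t, s)` is `c • m`. The ratio
`inf_C L(C) / m(C)` is unchanged when both measures are pushed along a measurable bijection,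
is multiplied by `c⁻¹` when `m` is replaced by `c • m`, and equals `essinf_m g` whenever
`L = g • m + ρ` with `ρ ⟂ m`: for the upper bound, test on `{g < a}` minus a null set
carrying `ρ`. The decomposition of the law of `(ζ, V)` restricts to `(t, ∞) × S`, the rest
being singular to the restricted measure, so the infimum for `(ζ - t, V)` is `c · essinf f`
over `(t, ∞) × S`.
-/

open scoped ENNReal

namespace MeasureTheory.Measure

variable {α β : Type*} [MeasurableSpace α] [MeasurableSpace β]

noncomputable def infRatio (L m : Measure α) : ℝ≥0∞ :=
  ⨅ (C : Set α) (_ : MeasurableSet C ∧ 0 < m C), L C / m C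

theorem infRatio_eq_essInf {L m ρ : Measure α} [IsFiniteMeasure m] {g : α → ℝ≥0∞}
    (hg : Measurable g) (hL : L = m.withDensity g + ρ) (hρ : ρ ⟂ₘ m) :
    infRatio L m = essInf g m := by
  refine le_antisymm (le_of_forall_gt_imp_ge_of_dense fun a ha => ?_) ?_
  · set A := {x | g x < a} ∩ hρ.nullSet
    have hA : MeasurableSet A :=
      (measurableSet_lt hg measurable_const).inter hρ.measurableSet_nullSet
    have hmA : 0 < m A := by
      rw [measure_inter_conull hρ.measure_compl_nullSet, pos_iff_ne_zero]
      intro h0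
      refine ha.not_ge (le_essInf_of_ae_le a ?_)
      simpa [Filter.EventuallyLE, ae_iff] using h0
    have hLA : L A ≤ a * m A := by
      rw [hL, add_apply, measure_mono_null inter_subset_right hρ.measure_nullSet, add_zero,
        withDensity_apply _ hA, ← setLIntegral_const]
      exact setLIntegral_mono measurable_const fun x hx => hx.1.le
    calc infRatio L m ≤ L A / m A := iInf₂_le A ⟨hA, hmA⟩
      _ ≤ a * m A / m A := by gcongr
      _ = a := ENNReal.mul_div_cancel_right hmA.ne' (measure_ne_top m A)
  · refine le_iInf₂ fun C ⟨hC, hmC⟩ => ?_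
    rw [ENNReal.le_div_iff_mul_le (Or.inl hmC.ne') (Or.inl (measure_ne_top m C)),
      ← setLIntegral_const]
    calc ∫⁻ _ in C, essInf g m ∂m ≤ ∫⁻ x in C, g x ∂m :=
          lintegral_mono_ae (ae_restrict_of_ae ae_essInf_le)
      _ = m.withDensity g C := (withDensity_apply _ hC).symm
      _ ≤ L C := hL ▸ le_add_right le_rfl

theorem infRatio_map_measurableEquiv (e : α ≃ᵐ β) (L m : Measure α) :
    infRatio (L.map e) (m.map e) = infRatio L m := by
  simp only [infRatio, e.map_apply, ← e.measurableSet_preimage (s := _)]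
  exact (Set.preimage_surjective.2 e.injective).iInf_comp
    fun D => ⨅ (_ : MeasurableSet D ∧ 0 < m D), L D / m D

theorem infRatio_smul_right (L m : Measure α) {c : ℝ≥0∞} (hc₀ : c ≠ 0) (hc : c ≠ ∞) :
    infRatio L (c • m) = c⁻¹ * infRatio L m := by
  simp only [infRatio,
    ENNReal.mul_iInf_of_ne (ENNReal.inv_ne_zero.2 hc) (ENNReal.inv_ne_top.2 hc₀)]
  refine iInf_congr fun C => ?_
  have hpos : 0 < (c • m) C ↔ 0 < m C := by simp [pos_iff_ne_zero, hc₀]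
  rw [hpos]
  refine iInf_congr fun _ => ?_
  rw [smul_apply, smul_eq_mul, div_eq_mul_inv, div_eq_mul_inv,
    ENNReal.mul_inv (Or.inl hc₀) (Or.inl hc)]
  ring

theorem exists_add_mutuallySingular_restrict {L m ρ : Measure α} {g : α → ℝ≥0∞}
    (hL : L = m.withDensity g + ρ) (hρ : ρ ⟂ₘ m) {s : Set α} (hs : MeasurableSet s) :
    ∃ ρ', L = (m.restrict s).withDensity g + ρ' ∧ ρ' ⟂ₘ m.restrict s := by
  refine ⟨(m.restrict sᶜ).withDensity g + ρ, ?_, ?_⟩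
  · rw [hL, ← add_assoc, ← withDensity_add_measure, restrict_add_restrict_compl hs]
  · refine .add_left (.mono_ac ?_ (withDensity_absolutelyContinuous _ _) .rfl)
      (hρ.mono le_rfl restrict_le_self)
    exact ⟨s, hs, by simp [restrict_apply hs], by simp [restrict_apply hs.compl]⟩

end MeasureTheory.Measure

namespace ProbabilityTheory

theorem expMeasure_eq_withDensity (γ : ℝ) :
    expMeasure γ = volume.withDensity (exponentialPDF γ) :=
  rfl

theorem expν_eq_expMeasure (γ : ℝ) : expν γ = expMeasure γ := by
  rw [expν, expMeasure_eq_withDensity]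
  congr 1
  funext x
  rw [exponentialPDF_eq, neg_mul]
  split_ifs <;> simp

instance (γ : ℝ) : SFinite (expMeasure γ) := by
  rw [expMeasure_eq_withDensity]
  infer_instance

theorem ofReal_exp_mul_exponentialPDF_sub {γ t : ℝ} (ht : 0 ≤ t) (x : ℝ) :
    ENNReal.ofReal (exp (-γ * t)) * exponentialPDF γ (x - t) =
      (Ici t).indicator (exponentialPDF γ) x := by
  by_cases hx : t ≤ x
  · rw [indicator_of_mem (mem_Ici.2 hx), exponentialPDF_of_nonneg (sub_nonneg.2 hx),
      exponentialPDF_of_nonneg (ht.trans hx), ← ENNReal.ofReal_mul (exp_nonneg _)]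
    congr 1
    rw [mul_left_comm, ← exp_add]
    ring_nf
  · rw [indicator_of_notMem (by simpa using hx), exponentialPDF_of_neg (by linarith), mul_zero]

theorem map_sub_restrict_Ioi_expMeasure {γ t : ℝ} (ht : 0 ≤ t) :
    ((expMeasure γ).restrict (Ioi t)).map (· - t) =
      ENNReal.ofReal (exp (-γ * t)) • expMeasure γ := by
  ext A hA
  have hpdf : Measurable (exponentialPDF γ) :=
    (measurable_exponentialPDFReal γ).ennreal_ofReal
  have hmeas : MeasurableSet ((· - t) ⁻¹' A) := measurable_sub_const t hA
  rw [Measure.map_apply (measurable_sub_const t) hA, Measure.restrict_apply hmeas,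
    Measure.smul_apply, smul_eq_mul, expMeasure_eq_withDensity,
    withDensity_apply _ (hmeas.inter measurableSet_Ioi), withDensity_apply _ hA,
    ← (measurePreserving_sub_right volume t).setLIntegral_comp_preimage hA hpdf,
    ← lintegral_const_mul' _ _ ENNReal.ofReal_ne_top]
  simp_rw [ofReal_exp_mul_exponentialPDF_sub ht]
  rw [setLIntegral_indicator measurableSet_Ici, inter_comm]
  exact setLIntegral_congr (Ioi_ae_eq_Ici.inter .rfl)

theorem map_restrict_Ioi_prod_expMeasure {S : Type*} [MeasurableSpace S] (μ : Measure S)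
    [SFinite μ] {γ t : ℝ} (ht : 0 ≤ t) :
    (((expMeasure γ).prod μ).restrict (Ioi t ×ˢ univ)).map (Prod.map (· - t) id) =
      ENNReal.ofReal (exp (-γ * t)) • (expMeasure γ).prod μ := by
  rw [← Measure.prod_restrict, Measure.restrict_univ,
    ← Measure.map_prod_map _ _ (measurable_sub_const t) measurable_id, Measure.map_id,
    map_sub_restrict_Ioi_expMeasure ht, Measure.prod_smul_left]

end ProbabilityTheory

theorem stmt_9_general {Ω : Type*} [MeasurableSpace Ω] (P : Measure Ω)
    {S : Type*} [MeasurableSpace S]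
    (μ : Measure S) [IsProbabilityMeasure μ]
    (γ : ℝ) (hγ : 0 < γ)
    (ζ : Ω → ℝ) (V : Ω → S) (hζm : Measurable ζ) (hVm : Measurable V)
    (f : ℝ × S → ℝ) (hfm : Measurable f)
    (ρs : Measure (ℝ × S))
    (hdecomp : Measure.map (fun ω => (ζ ω, V ω)) P =
      ((expν γ).prod μ).withDensity (fun p => ENNReal.ofReal (f p)) + ρs)
    (hsing : ρs ⟂ₘ (expν γ).prod μ) :
    ∀ t, 0 ≤ t →
      (⨅ (C : Set (ℝ × S)) (_ : MeasurableSet C ∧ 0 < ((expν γ).prod μ) C),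
          P ((fun ω => (ζ ω - t, V ω)) ⁻¹' C) / ((expν γ).prod μ) C) =
        ENNReal.ofReal (Real.exp (-γ * t)) *
          essInf (fun p => ENNReal.ofReal (f p))
            (((expν γ).prod μ).restrict (Set.Ioi t ×ˢ (Set.univ : Set S))) := by
  intro t ht
  rw [expν_eq_expMeasure] at hdecomp hsing ⊢
  have := isProbabilityMeasure_expMeasure hγ
  set m := (expMeasure γ).prod μ
  set c := ENNReal.ofReal (exp (-γ * t))
  have hc₀ : c ≠ 0 := (ENNReal.ofReal_pos.2 (exp_pos _)).ne'
  let T : ℝ × S ≃ᵐ ℝ × S := (MeasurableEquiv.subRight t).prodCongr (.refl S)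
  set L := P.map fun ω => (ζ ω, V ω)
  have hshift : ∀ C, MeasurableSet C →
      P ((fun ω => (ζ ω - t, V ω)) ⁻¹' C) = L.map T C := fun C hC => by
    rw [Measure.map_map T.measurable (hζm.prodMk hVm),
      Measure.map_apply (T.measurable.comp (hζm.prodMk hVm)) hC]
    rfl
  obtain ⟨ρ, hLW, hρ⟩ :=
    Measure.exists_add_mutuallySingular_restrict hdecomp hsing (measurableSet_Ioi.prod .univ)
  calc _ = Measure.infRatio (L.map T) m :=
        iInf_congr fun C => iInf_congr fun hC => by rw [hshift C hC.1]
    _ = c * Measure.infRatio (L.map T) (c • m) := by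
      rw [Measure.infRatio_smul_right _ _ hc₀ ENNReal.ofReal_ne_top, ← mul_assoc,
        ENNReal.mul_inv_cancel hc₀ ENNReal.ofReal_ne_top, one_mul]
    _ = c * Measure.infRatio (L.map T) ((m.restrict (Ioi t ×ˢ univ)).map T) := by
      rw [← map_restrict_Ioi_prod_expMeasure μ ht]
      rfl
    _ = _ := by
      rw [Measure.infRatio_map_measurableEquiv,
        Measure.infRatio_eq_essInf (by fun_prop) hLW hρ]

/-- Theorem 3.3: for a finite mark space `S` and `f` the density of the absolutely continuous
part of the law of `(ζ, V)` with respect to `ν_γ × μ`,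
`inf_C ℙ((ζ−t,V) ∈ C)/(ν_γ×μ)(C) = e^{−γt}·essinf_{(t,∞)×S} f` for every `t ∈ ℝ₊`. -/
theorem stmt_9 {Ω : Type*} [MeasurableSpace Ω] (P : Measure Ω) [IsProbabilityMeasure P]
    {S : Type*} [Fintype S] [Nonempty S] [MeasurableSpace S] [MeasurableSingletonClass S]
    (μ : Measure S) [IsProbabilityMeasure μ]
    (γ : ℝ) (hγ : 0 < γ)
    (ζ : Ω → ℝ) (V : Ω → S) (hζm : Measurable ζ) (hVm : Measurable V)
    (hζ0 : ∀ ω, 0 ≤ ζ ω)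
    (f : ℝ × S → ℝ) (hfm : Measurable f) (hf0 : ∀ p, 0 ≤ f p)
    (ρs : Measure (ℝ × S))
    (hdecomp : Measure.map (fun ω => (ζ ω, V ω)) P =
      ((expν γ).prod μ).withDensity (fun p => ENNReal.ofReal (f p)) + ρs)
    (hsing : ρs ⟂ₘ (expν γ).prod μ) :
    ∀ t, 0 ≤ t →
      (⨅ (C : Set (ℝ × S)) (_ : MeasurableSet C ∧ 0 < ((expν γ).prod μ) C),
          P ((fun ω => (ζ ω - t, V ω)) ⁻¹' C) / ((expν γ).prod μ) C) =
        ENNReal.ofReal (Real.exp (-γ * t)) *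
          essInf (fun p => ENNReal.ofReal (f p))
            (((expν γ).prod μ).restrict (Set.Ioi t ×ˢ (Set.univ : Set S))) :=
  stmt_9_general P μ γ hγ ζ V hζm hVm f hfm ρs hdecomp hsing
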